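/- For the nearest-neighbour random walk on ℤ with positive conductances, started at 0, with heat kernel h_n(x) = P_0[S_n=x]/c̄(x): for all integers n ≥ 1 and K ≥ 1, ‖h_n‖² − 1/(Σ_{x∈B(0,K)∩2ℤ} c̄(x)) ≤ √(‖h_{2n}‖² − ‖h_{2n+1}‖²) · (Σ_{x=−K}^{K−1} 1/c(x,x+1))^{1/2}. -/

import Mathlib

open scoped BigOperators

/-- `cbar κ x = c(x−1,x) + c(x,x+1)`, where `κ x` denotes the conductance of
the edge `{x, x+1}` of `ℤ`. -/
noncomputable def cbar (κ : ℤ → ℝ) (x : ℤ) : ℝ := κ (x - 1) + κ x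

/-- One-step transition probabilities of the nearest-neighbour conductance walk. -/
noncomputable def step (κ : ℤ → ℝ) (x y : ℤ) : ℝ :=
  if y = x + 1 then κ x / cbar κ x
  else if y = x - 1 then κ (x - 1) / cbar κ x else 0

/-- `walk κ n x y = P_x[S_n = y]`, the `n`-step transition probabilities. -/
noncomputable def walk (κ : ℤ → ℝ) : ℕ → ℤ → ℤ → ℝ
  | 0, x, y => if y = x then 1 else 0
  | (n+1), x, y =>
      walk κ n x (y - 1) * step κ (y - 1) y + walk κ n x (y + 1) * step κ (y + 1) y

/-- The heat kernel `h_n(x) = P_0[S_n = x] / c̄(x)`. -/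
noncomputable def heatK (κ : ℤ → ℝ) (n : ℕ) (x : ℤ) : ℝ := walk κ n 0 x / cbar κ x

/-- The energy `‖h_n‖² = Σ_x h_n(x)² c̄(x)`. -/
noncomputable def energy (κ : ℤ → ℝ) (n : ℕ) : ℝ :=
  ∑' x : ℤ, (heatK κ n x) ^ 2 * cbar κ x

/-!
Put `u = h_{2n} + h_{2n+1}`. Because the transition operator is self-adjoint for the weights `c̄`,
`Σ_x h_a(x) h_b(x) c̄(x) = h_{a+b}(0)`; returns to `0` at odd times being impossible, this gives
`u(0) = ‖h_n‖²` and `E(u, u) = ‖h_{2n}‖² − ‖h_{2n+1}‖²`. On even sites `u = h_{2n}`, whose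
`c̄`-mass is at most `1`, so `u(x) ≤ 1 / c̄(B(0,K) ∩ 2ℤ)` at some even `x ∈ B(0,K)`. Telescoping
`u(0) − u(x)` along the edges of `[-K, K]` and applying Cauchy–Schwarz with weights `c(y,y+1)`
bounds it by `√E(u, u) · (Σ 1/c(y,y+1))^{1/2}`.
-/

open Finset Function

lemma sum_Ico_succ_sub_eq {M : Type*} [AddCommGroup M] (f : ℤ → M) {a b : ℤ} (hab : a ≤ b) :
    ∑ x ∈ Ico a b, (f (x + 1) - f x) = f b - f a := by
  induction b, hab using Int.leInduction with
  | base => simp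
  | succ b hab ih =>
    rw [← insert_Ico_right_eq_Ico_add_one hab, sum_insert (by simp), ih]
    abel

lemma abs_sub_le_sum_Ico_abs_sub (f : ℤ → ℝ) {lo hi a b : ℤ} (ha : a ∈ Icc lo hi)
    (hb : b ∈ Icc lo hi) : |f a - f b| ≤ ∑ x ∈ Ico lo hi, |f (x + 1) - f x| := by
  wlog hab : a ≤ b generalizing a b
  · rw [abs_sub_comm]
    exact this hb ha (le_of_not_ge hab)
  rw [mem_Icc] at ha hb
  rw [abs_sub_comm, ← sum_Ico_succ_sub_eq f hab]
  calc |∑ x ∈ Ico a b, (f (x + 1) - f x)| ≤ ∑ x ∈ Ico a b, |f (x + 1) - f x| :=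
        abs_sum_le_sum_abs _ _
    _ ≤ ∑ x ∈ Ico lo hi, |f (x + 1) - f x| :=
        sum_le_sum_of_subset_of_nonneg (Ico_subset_Ico ha.1 hb.2) fun _ _ _ => abs_nonneg _

lemma sum_abs_le_sqrt_mul_sqrt {ι : Type*} (s : Finset ι) {w : ι → ℝ} (hw : ∀ i ∈ s, 0 < w i)
    (g : ι → ℝ) : ∑ i ∈ s, |g i| ≤ √(∑ i ∈ s, w i * g i ^ 2) * √(∑ i ∈ s, 1 / w i) := by
  have key := Real.sum_mul_le_sqrt_mul_sqrt s (fun i => √(w i) * |g i|) (fun i => 1 / √(w i))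
  have hprod : ∀ i ∈ s, √(w i) * |g i| * (1 / √(w i)) = |g i| := fun i hi => by
    have := (Real.sqrt_pos.mpr (hw i hi)).ne'
    field_simp
  have hleft : ∀ i ∈ s, (√(w i) * |g i|) ^ 2 = w i * g i ^ 2 := fun i hi => by
    rw [mul_pow, Real.sq_sqrt (hw i hi).le, sq_abs]
  have hright : ∀ i ∈ s, (1 / √(w i)) ^ 2 = 1 / w i := fun i hi => by
    rw [div_pow, one_pow, Real.sq_sqrt (hw i hi).le]
  rwa [sum_congr rfl hprod, sum_congr rfl hleft, sum_congr rfl hright] at key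

lemma abs_sub_le_sqrt_mul_sqrt (f : ℤ → ℝ) {w : ℤ → ℝ} {lo hi a b : ℤ}
    (hw : ∀ x ∈ Ico lo hi, 0 < w x) (ha : a ∈ Icc lo hi) (hb : b ∈ Icc lo hi) :
    |f a - f b| ≤ √(∑ x ∈ Ico lo hi, w x * (f (x + 1) - f x) ^ 2) * √(∑ x ∈ Ico lo hi, 1 / w x) :=
  (abs_sub_le_sum_Ico_abs_sub f ha hb).trans (sum_abs_le_sqrt_mul_sqrt _ hw _)

lemma exists_le_one_div_sum_of_sum_mul_le_one {ι : Type*} {s : Finset ι} (hs : s.Nonempty)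
    {f w : ι → ℝ} (hw : ∀ i ∈ s, 0 < w i) (h : ∑ i ∈ s, f i * w i ≤ 1) :
    ∃ i ∈ s, f i ≤ 1 / ∑ i ∈ s, w i := by
  have hW : 0 < ∑ i ∈ s, w i := sum_pos hw hs
  obtain ⟨i, hi, hle⟩ := exists_le_of_sum_le hs (f := fun i => f i * w i)
    (g := fun i => 1 / (∑ j ∈ s, w j) * w i) (by rwa [← mul_sum, one_div_mul_cancel hW.ne'])
  exact ⟨i, hi, le_of_mul_le_mul_right hle (hw i hi)⟩

section FiniteSupportSums

lemma hasFiniteSupport_of_edge {M N : Type*} [Zero M] [Zero N] {f : ℤ → M} {F : ℤ → N}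
    (hf : f.HasFiniteSupport) (hF : ∀ x, f x = 0 → f (x + 1) = 0 → F x = 0) :
    F.HasFiniteSupport := by
  refine (Set.Finite.union hf (hf.preimage (add_left_injective 1).injOn)).subset fun x hx => ?_
  by_contra h
  simp only [Set.mem_union, mem_support, Set.mem_preimage, not_or, not_not] at h
  exact hx (hF x h.1 h.2)

lemma tsum_comp_sub_one_add {F G : ℤ → ℝ} (hF : F.HasFiniteSupport) (hG : G.HasFiniteSupport) :
    ∑' x, (F (x - 1) + G x) = ∑' x, (F x + G x) := by
  have hF' : (fun x => F (x - 1)).HasFiniteSupport := hF.fun_comp_of_injective sub_left_injective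
  rw [(summable_of_hasFiniteSupport hF').tsum_add (summable_of_hasFiniteSupport hG),
    (summable_of_hasFiniteSupport hF).tsum_add (summable_of_hasFiniteSupport hG)]
  exact congrArg (· + ∑' x, G x) ((Equiv.subRight (1 : ℤ)).tsum_eq F)

/-- `f ↦ adjSum κ f / cbar κ` is the transition operator of the walk. -/
noncomputable def adjSum (κ f : ℤ → ℝ) (y : ℤ) : ℝ := κ (y - 1) * f (y - 1) + κ y * f (y + 1)

noncomputable def dirichletForm (κ f : ℤ → ℝ) : ℝ := ∑' x, κ x * (f (x + 1) - f x) ^ 2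

variable {κ f g : ℤ → ℝ}

lemma adjSum_one : adjSum κ (fun _ => 1) = cbar κ := by
  funext y
  simp [adjSum, cbar]

lemma adjSum_add : adjSum κ (f + g) = adjSum κ f + adjSum κ g := by
  funext y
  simp only [adjSum, Pi.add_apply]
  ring

lemma tsum_mul_adjSum (hg : g.HasFiniteSupport) :
    ∑' x, g x * adjSum κ f x = ∑' x, κ x * (f x * g (x + 1) + f (x + 1) * g x) := by
  have hF : (fun x => κ x * f x * g (x + 1)).HasFiniteSupport :=
    hasFiniteSupport_of_edge hg fun x _ h1 => by simp [h1]
  have hG : (fun x => κ x * f (x + 1) * g x).HasFiniteSupport :=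
    hasFiniteSupport_of_edge hg fun x h0 _ => by simp [h0]
  calc ∑' x, g x * adjSum κ f x = ∑' x, (κ x * f x * g (x + 1) + κ x * f (x + 1) * g x) := by
        refine (tsum_congr fun x => ?_).trans (tsum_comp_sub_one_add hF hG)
        simp only [adjSum, sub_add_cancel]
        ring
    _ = ∑' x, κ x * (f x * g (x + 1) + f (x + 1) * g x) := tsum_congr fun x => by ring

lemma tsum_mul_adjSum_comm (hf : f.HasFiniteSupport) (hg : g.HasFiniteSupport) :
    ∑' x, g x * adjSum κ f x = ∑' x, f x * adjSum κ g x := by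
  rw [tsum_mul_adjSum hg, tsum_mul_adjSum hf]
  exact tsum_congr fun x => by ring

lemma tsum_adjSum (hf : f.HasFiniteSupport) : ∑' x, adjSum κ f x = ∑' x, f x * cbar κ x := by
  have hκf : (fun x => κ x * f x).HasFiniteSupport :=
    hasFiniteSupport_of_edge hf fun x h0 _ => by simp [h0]
  have hκf' : (fun x => κ x * f (x + 1)).HasFiniteSupport :=
    hasFiniteSupport_of_edge hf fun x _ h1 => by simp [h1]
  calc ∑' x, adjSum κ f x = ∑' x, (κ x * f x + κ x * f (x + 1)) :=
        tsum_comp_sub_one_add hκf hκf'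
    _ = ∑' x, (κ x * f (x + 1) + κ x * f x) := tsum_congr fun x => add_comm _ _
    _ = ∑' x, f x * cbar κ x := by
        refine (tsum_comp_sub_one_add hκf' hκf).symm.trans (tsum_congr fun x => ?_)
        simp only [cbar, sub_add_cancel]
        ring

lemma dirichletForm_eq (hf : f.HasFiniteSupport) :
    dirichletForm κ f = ∑' x, f x ^ 2 * cbar κ x - ∑' x, f x * adjSum κ f x := by
  have hdiag : Summable fun x => κ x * (1 * f (x + 1) ^ 2 + 1 * f x ^ 2) :=
    summable_of_hasFiniteSupport (hasFiniteSupport_of_edge hf fun x h0 h1 => by simp [h0, h1])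
  have hcross : Summable fun x => κ x * (f x * f (x + 1) + f (x + 1) * f x) :=
    summable_of_hasFiniteSupport (hasFiniteSupport_of_edge hf fun x h0 _ => by simp [h0])
  have hsq : (fun x => f x ^ 2).HasFiniteSupport :=
    hasFiniteSupport_of_edge hf fun x h0 _ => by simp [h0]
  calc dirichletForm κ f
      = ∑' x, (κ x * (1 * f (x + 1) ^ 2 + 1 * f x ^ 2)
          - κ x * (f x * f (x + 1) + f (x + 1) * f x)) := tsum_congr fun x => by ring
    _ = ∑' x, f x ^ 2 * adjSum κ (fun _ => 1) x - ∑' x, f x * adjSum κ f x := by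
        rw [hdiag.tsum_sub hcross, tsum_mul_adjSum hsq, tsum_mul_adjSum hf]
    _ = ∑' x, f x ^ 2 * cbar κ x - ∑' x, f x * adjSum κ f x := by rw [adjSum_one]

lemma sum_le_dirichletForm (hκ : ∀ x, 0 ≤ κ x) (hf : f.HasFiniteSupport) (s : Finset ℤ) :
    ∑ x ∈ s, κ x * (f (x + 1) - f x) ^ 2 ≤ dirichletForm κ f :=
  Summable.sum_le_tsum s (fun x _ => mul_nonneg (hκ x) (sq_nonneg _))
    (summable_of_hasFiniteSupport (hasFiniteSupport_of_edge hf fun x h0 h1 => by simp [h0, h1]))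

end FiniteSupportSums

section HeatKernel

variable {κ : ℤ → ℝ}

lemma cbar_pos (hκ : ∀ x, 0 < κ x) (x : ℤ) : 0 < cbar κ x := add_pos (hκ _) (hκ _)

lemma walk_eq_zero_of_lt_abs (m : ℕ) {x y : ℤ} (h : (m : ℤ) < |y - x|) : walk κ m x y = 0 := by
  induction m generalizing y with
  | zero => simp_all [walk, sub_eq_zero]
  | succ m ih =>
    rw [lt_abs] at h
    rw [walk, ih (by rw [lt_abs]; omega), ih (by rw [lt_abs]; omega)]
    ring

lemma walk_eq_zero_of_odd (m : ℕ) {x y : ℤ} (h : Odd (y - x + m)) : walk κ m x y = 0 := by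
  induction m generalizing y with
  | zero =>
    rw [walk, if_neg]
    rintro rfl
    simp at h
  | succ m ih =>
    rw [Int.odd_iff] at h
    rw [walk, ih (by rw [Int.odd_iff]; omega), ih (by rw [Int.odd_iff]; omega)]
    ring

lemma walk_succ_zero_eq_adjSum (m : ℕ) (y : ℤ) : walk κ (m + 1) 0 y = adjSum κ (heatK κ m) y := by
  rw [walk, step, step, if_pos (sub_add_cancel y 1).symm, if_neg (by omega),
    if_pos (add_sub_cancel_right y 1).symm, add_sub_cancel_right, adjSum, heatK, heatK]
  ring

lemma heatK_mul_cbar (hκ : ∀ x, 0 < κ x) (m : ℕ) (x : ℤ) :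
    heatK κ m x * cbar κ x = walk κ m 0 x :=
  div_mul_cancel₀ _ (cbar_pos hκ x).ne'

lemma adjSum_heatK (hκ : ∀ x, 0 < κ x) (m : ℕ) (x : ℤ) :
    adjSum κ (heatK κ m) x = heatK κ (m + 1) x * cbar κ x := by
  rw [heatK_mul_cbar hκ, walk_succ_zero_eq_adjSum]

lemma hasFiniteSupport_heatK (m : ℕ) : (heatK κ m).HasFiniteSupport := by
  refine (Set.finite_Icc (-(m : ℤ)) m).subset fun x hx => ?_
  by_contra hout
  rw [Set.mem_Icc, ← abs_le, not_le] at hout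
  exact hx (by rw [heatK, walk_eq_zero_of_lt_abs m (by rwa [sub_zero]), zero_div])

lemma heatK_eq_zero_of_odd {m : ℕ} {x : ℤ} (h : Odd (x + m)) : heatK κ m x = 0 := by
  rw [heatK, walk_eq_zero_of_odd m (by rwa [sub_zero]), zero_div]

lemma heatK_nonneg (hκ : ∀ x, 0 < κ x) (m : ℕ) (x : ℤ) : 0 ≤ heatK κ m x := by
  induction m generalizing x with
  | zero => exact div_nonneg (by simp only [walk]; split_ifs <;> norm_num) (cbar_pos hκ x).le
  | succ m ih =>
    rw [heatK, walk_succ_zero_eq_adjSum]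
    exact div_nonneg (add_nonneg (mul_nonneg (hκ _).le (ih _)) (mul_nonneg (hκ _).le (ih _)))
      (cbar_pos hκ x).le

lemma tsum_heatK_mul_cbar (hκ : ∀ x, 0 < κ x) (m : ℕ) : ∑' x, heatK κ m x * cbar κ x = 1 := by
  induction m with
  | zero => simp [heatK_mul_cbar hκ, walk]
  | succ m ih =>
    calc ∑' x, heatK κ (m + 1) x * cbar κ x = ∑' x, adjSum κ (heatK κ m) x :=
          tsum_congr fun x => (adjSum_heatK hκ m x).symm
      _ = 1 := by rw [tsum_adjSum (hasFiniteSupport_heatK m), ih]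

lemma sum_heatK_mul_cbar_le_one (hκ : ∀ x, 0 < κ x) (m : ℕ) (s : Finset ℤ) :
    ∑ x ∈ s, heatK κ m x * cbar κ x ≤ 1 :=
  tsum_heatK_mul_cbar hκ m ▸ Summable.sum_le_tsum s
    (fun x _ => mul_nonneg (heatK_nonneg hκ m x) (cbar_pos hκ x).le)
    (summable_of_hasFiniteSupport ((hasFiniteSupport_heatK m).fun_mul_left _))

/-- Self-adjointness of the transition operator moves one step from `h_{a+1}` to `h_b`. -/
lemma tsum_heatK_mul_heatK (hκ : ∀ x, 0 < κ x) (a b : ℕ) :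
    ∑' x, heatK κ a x * heatK κ b x * cbar κ x = heatK κ (a + b) 0 := by
  induction a generalizing b with
  | zero =>
    calc ∑' x, heatK κ 0 x * heatK κ b x * cbar κ x = ∑' x, walk κ 0 0 x * heatK κ b x :=
          tsum_congr fun x => by rw [← heatK_mul_cbar hκ]; ring
      _ = heatK κ (0 + b) 0 := by simp [walk]
  | succ a ih =>
    calc ∑' x, heatK κ (a + 1) x * heatK κ b x * cbar κ x
        = ∑' x, heatK κ b x * adjSum κ (heatK κ a) x :=
          tsum_congr fun x => by rw [adjSum_heatK hκ]; ring
      _ = ∑' x, heatK κ a x * adjSum κ (heatK κ b) x :=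
          tsum_mul_adjSum_comm (hasFiniteSupport_heatK a) (hasFiniteSupport_heatK b)
      _ = ∑' x, heatK κ a x * heatK κ (b + 1) x * cbar κ x :=
          tsum_congr fun x => by rw [adjSum_heatK hκ]; ring
      _ = heatK κ (a + 1 + b) 0 := by rw [ih, Nat.add_right_comm, Nat.add_assoc]

lemma energy_eq_heatK (hκ : ∀ x, 0 < κ x) (m : ℕ) : energy κ m = heatK κ (m + m) 0 := by
  rw [energy, ← tsum_heatK_mul_heatK hκ]
  exact tsum_congr fun x => by ring

lemma tsum_heatK_add_mul_heatK_add (hκ : ∀ x, 0 < κ x) (a b c d : ℕ) :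
    ∑' x, (heatK κ a x + heatK κ b x) * (heatK κ c x + heatK κ d x) * cbar κ x
      = heatK κ (a + c) 0 + heatK κ (a + d) 0 + heatK κ (b + c) 0 + heatK κ (b + d) 0 := by
  have hs : ∀ i j, Summable fun x => heatK κ i x * heatK κ j x * cbar κ x := fun i j =>
    summable_of_hasFiniteSupport
      (((hasFiniteSupport_heatK i).fun_mul_left (heatK κ j)).fun_mul_left (cbar κ))
  simp only [← tsum_heatK_mul_heatK hκ]
  rw [← (hs a c).tsum_add (hs a d), ← ((hs a c).add (hs a d)).tsum_add (hs b c),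
    ← (((hs a c).add (hs a d)).add (hs b c)).tsum_add (hs b d)]
  exact tsum_congr fun x => by ring

lemma heatK_apply_zero_of_odd {m : ℕ} (hm : Odd m) : heatK κ m 0 = 0 :=
  heatK_eq_zero_of_odd (by simpa using hm)

/-- The cross terms `⟨h_m, h_{m+1}⟩` and `⟨h_{m+1}, h_{m+2}⟩` are return probabilities at odd
times, hence vanish. -/
lemma dirichletForm_heatK_add_heatK_succ (hκ : ∀ x, 0 < κ x) (m : ℕ) :
    dirichletForm κ (heatK κ m + heatK κ (m + 1)) = energy κ m - energy κ (m + 1) := by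
  have hu : (heatK κ m + heatK κ (m + 1)).HasFiniteSupport :=
    (hasFiniteSupport_heatK m).add (hasFiniteSupport_heatK (m + 1))
  have hsq : ∀ x, (heatK κ m + heatK κ (m + 1)) x ^ 2 * cbar κ x
      = (heatK κ m x + heatK κ (m + 1) x) * (heatK κ m x + heatK κ (m + 1) x) * cbar κ x :=
    fun x => by simp only [Pi.add_apply]; ring
  have hadj : ∀ x, (heatK κ m + heatK κ (m + 1)) x * adjSum κ (heatK κ m + heatK κ (m + 1)) x
      = (heatK κ m x + heatK κ (m + 1) x) * (heatK κ (m + 1) x + heatK κ (m + 1 + 1) x)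
        * cbar κ x := fun x => by
    rw [adjSum_add, Pi.add_apply, Pi.add_apply, adjSum_heatK hκ, adjSum_heatK hκ]
    ring
  rw [dirichletForm_eq hu, tsum_congr hsq, tsum_congr hadj, tsum_heatK_add_mul_heatK_add hκ,
    tsum_heatK_add_mul_heatK_add hκ, energy_eq_heatK hκ, energy_eq_heatK hκ,
    heatK_apply_zero_of_odd (m := m + (m + 1)) ⟨m, by ring⟩,
    heatK_apply_zero_of_odd (m := m + 1 + m) ⟨m, by ring⟩,
    heatK_apply_zero_of_odd (m := m + 1 + (m + 1 + 1)) ⟨m + 1, by ring⟩,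
    show m + (m + 1 + 1) = m + 1 + (m + 1) by ring]
  ring

end HeatKernel

theorem energy_oscillation_bound_general (κ : ℤ → ℝ) (hκ : ∀ x, 0 < κ x)
    (n : ℕ) (K : ℕ) (hK : 1 ≤ K) :
    energy κ n -
        1 / (∑ x ∈ (Finset.Ioo (-(K : ℤ)) (K : ℤ)).filter (fun x => Even x), cbar κ x)
      ≤ Real.sqrt (energy κ (2 * n) - energy κ (2 * n + 1)) *
          Real.sqrt (∑ x ∈ Finset.Ico (-(K : ℤ)) (K : ℤ), 1 / κ x) := by
  set B := (Ioo (-(K : ℤ)) K).filter (fun x => Even x)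
  set u := heatK κ (2 * n) + heatK κ (2 * n + 1)
  have hu_even : ∀ x ∈ B, u x * cbar κ x = heatK κ (2 * n) x * cbar κ x := fun x hx => by
    obtain ⟨k, rfl⟩ := (mem_filter.mp hx).2
    simp only [u, Pi.add_apply]
    rw [heatK_eq_zero_of_odd (m := 2 * n + 1) ⟨k + n, by push_cast; ring⟩, add_zero]
  have h0B : (0 : ℤ) ∈ B := mem_filter.mpr ⟨mem_Ioo.mpr ⟨by omega, by omega⟩, Even.zero⟩
  obtain ⟨x, hxB, hx⟩ : ∃ x ∈ B, u x ≤ 1 / ∑ x ∈ B, cbar κ x :=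
    exists_le_one_div_sum_of_sum_mul_le_one ⟨0, h0B⟩ (fun x _ => cbar_pos hκ x)
      ((sum_congr rfl hu_even).trans_le (sum_heatK_mul_cbar_le_one hκ _ _))
  have hx_mem : x ∈ Icc (-(K : ℤ)) K := by
    obtain ⟨h1, h2⟩ := mem_Ioo.mp (mem_filter.mp hxB).1
    exact mem_Icc.mpr ⟨h1.le, h2.le⟩
  have henergy : energy κ n = u 0 := by
    simp only [u, Pi.add_apply]
    rw [energy_eq_heatK hκ, heatK_apply_zero_of_odd ⟨n, rfl⟩, add_zero, two_mul]
  calc energy κ n - 1 / ∑ x ∈ B, cbar κ x ≤ |u 0 - u x| := by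
        rw [henergy]
        exact (sub_le_sub_left hx _).trans (le_abs_self _)
    _ ≤ √(∑ y ∈ Ico (-(K : ℤ)) K, κ y * (u (y + 1) - u y) ^ 2)
          * √(∑ y ∈ Ico (-(K : ℤ)) K, 1 / κ y) :=
        abs_sub_le_sqrt_mul_sqrt u (fun y _ => hκ y) (by simp) hx_mem
    _ ≤ √(dirichletForm κ u) * √(∑ y ∈ Ico (-(K : ℤ)) K, 1 / κ y) := by
        gcongr
        exact sum_le_dirichletForm (fun y => (hκ y).le)
          ((hasFiniteSupport_heatK _).add (hasFiniteSupport_heatK _)) _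
    _ = √(energy κ (2 * n) - energy κ (2 * n + 1)) * √(∑ y ∈ Ico (-(K : ℤ)) K, 1 / κ y) := by
        rw [dirichletForm_heatK_add_heatK_succ hκ]

theorem energy_oscillation_bound (κ : ℤ → ℝ) (hκ : ∀ x, 0 < κ x)
    (n : ℕ) (hn : 1 ≤ n) (K : ℕ) (hK : 1 ≤ K) :
    energy κ n -
        1 / (∑ x ∈ (Finset.Ioo (-(K : ℤ)) (K : ℤ)).filter (fun x => Even x), cbar κ x)
      ≤ Real.sqrt (energy κ (2 * n) - energy κ (2 * n + 1)) *
          Real.sqrt (∑ x ∈ Finset.Ico (-(K : ℤ)) (K : ℤ), 1 / κ x) :=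
  energy_oscillation_bound_general κ hκ n K hK
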